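/- arXiv:2001.05765 — 5 statements merged into one kernel-verified Lean document; each statement's English description precedes it below -/
import Mathlib

section
/- For every integer ℓ ≥ 2, the sum ∑_{k=1}^{ℓ-1} C(ℓ,k)·(k!)² is strictly less than (ℓ!)². -/
lemma sum_factorial_lt (n : ℕ) (hn : 2 ≤ n) :
    ∑ k ∈ Finset.Ico 1 n, Nat.factorial k < Nat.factorial n := by
  induction n with
  | zero => omega
  | succ m ih =>
    rcases Nat.lt_or_ge m 2 with hm | hm
    · interval_cases m
      · omega
      · simp [Nat.factorial]
    · rw [Finset.sum_Ico_succ_top (by omega)]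
      have h2 : Nat.factorial m + Nat.factorial m ≤ Nat.factorial (m + 1) := by
        rw [Nat.factorial_succ]
        nlinarith [Nat.factorial_pos m]
      omega

theorem sum_choose_sq_factorial_lt (ℓ : ℕ) (hℓ : 2 ≤ ℓ) :
    ∑ k ∈ Finset.Ico 1 ℓ, ℓ.choose k * (Nat.factorial k) ^ 2 < (Nat.factorial ℓ) ^ 2 := by
  have hbound : ∀ k ∈ Finset.Ico 1 ℓ,
      ℓ.choose k * (Nat.factorial k) ^ 2 ≤ Nat.factorial ℓ * Nat.factorial k := by
    intro k hk
    simp only [Finset.mem_Ico] at hk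
    have h1 : ℓ.choose k * Nat.factorial k ≤ Nat.factorial ℓ := by
      have := Nat.choose_mul_factorial_mul_factorial (le_of_lt hk.2)
      calc ℓ.choose k * Nat.factorial k
          ≤ ℓ.choose k * Nat.factorial k * Nat.factorial (ℓ - k) :=
            Nat.le_mul_of_pos_right _ (Nat.factorial_pos _)
        _ = Nat.factorial ℓ := this
    calc ℓ.choose k * (Nat.factorial k) ^ 2
        = (ℓ.choose k * Nat.factorial k) * Nat.factorial k := by ring
      _ ≤ Nat.factorial ℓ * Nat.factorial k :=
        Nat.mul_le_mul_right _ h1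
  calc ∑ k ∈ Finset.Ico 1 ℓ, ℓ.choose k * (Nat.factorial k) ^ 2
      ≤ ∑ k ∈ Finset.Ico 1 ℓ, Nat.factorial ℓ * Nat.factorial k := Finset.sum_le_sum hbound
    _ = Nat.factorial ℓ * ∑ k ∈ Finset.Ico 1 ℓ, Nat.factorial k := by rw [Finset.mul_sum]
    _ < Nat.factorial ℓ * Nat.factorial ℓ :=
        Nat.mul_lt_mul_of_le_of_lt (le_refl _) (sum_factorial_lt ℓ hℓ) (Nat.factorial_pos ℓ)
    _ = (Nat.factorial ℓ) ^ 2 := by ring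
end

section
/- Let d ≥ 2 and define T_d(ℓ) = (ℓ!)²/(d!)² for ℓ ∈ {1,…,d}. Then for every ℓ ∈ {2,…,d}, T_d(ℓ) > ∑_{k=1}^{ℓ-1} C(ℓ,k)·T_d(k). -/
/-!
After clearing the common denominator `(d!)²`: for `k < ℓ`,
`C(ℓ,k) · (k!)² = (ℓ!/(ℓ-k)!) · k! ≤ ℓ! · (ℓ-1)!`, so the `ℓ - 1` terms of the sum add up to at most
`(ℓ-1) · (ℓ-1)! · ℓ!`, which is less than `ℓ! · ℓ! = (ℓ!)²`.
-/

open Finset Nat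

lemma Nat.descFactorial_le_factorial (n k : ℕ) : n.descFactorial k ≤ n ! := by
  rcases le_or_gt k n with hkn | hnk
  · rw [← factorial_mul_descFactorial hkn]
    exact Nat.le_mul_of_pos_left _ (factorial_pos _)
  · simp [descFactorial_eq_zero_iff_lt.mpr hnk]

lemma Nat.sub_one_mul_factorial_sub_one_lt_factorial (n : ℕ) : (n - 1) * (n - 1)! < n ! := by
  cases n with
  | zero => simp
  | succ n =>
    rw [factorial_succ, Nat.add_sub_cancel]
    exact Nat.mul_lt_mul_of_pos_right (Nat.lt_succ_self n) (factorial_pos n)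

lemma Nat.choose_mul_factorial_sq_le {n k : ℕ} (hk : k < n) :
    n.choose k * k ! ^ 2 ≤ n ! * (n - 1)! := by
  calc n.choose k * k ! ^ 2 = n.descFactorial k * k ! := by
        rw [descFactorial_eq_factorial_mul_choose]; ring
    _ ≤ n ! * (n - 1)! :=
        Nat.mul_le_mul (descFactorial_le_factorial n k) (factorial_le (by omega))

lemma Nat.sum_choose_mul_factorial_sq_lt (n : ℕ) :
    ∑ k ∈ Ico 1 n, n.choose k * k ! ^ 2 < n ! ^ 2 := by
  calc ∑ k ∈ Ico 1 n, n.choose k * k ! ^ 2 ≤ ∑ _k ∈ Ico 1 n, n ! * (n - 1)! :=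
        sum_le_sum fun k hk => choose_mul_factorial_sq_le (mem_Ico.mp hk).2
    _ = (n - 1) * (n - 1)! * n ! := by
        rw [sum_const, card_Ico, smul_eq_mul]; ring
    _ < n ! * n ! :=
        Nat.mul_lt_mul_of_pos_right (sub_one_mul_factorial_sub_one_lt_factorial n) (factorial_pos n)
    _ = n ! ^ 2 := (sq _).symm

theorem T_ell_gt_sum_general (d : ℕ)
    (T : ℕ → ℝ) (hT : ∀ ℓ, T ℓ = ((Nat.factorial ℓ : ℝ)) ^ 2 / ((Nat.factorial d : ℝ)) ^ 2)
    (ℓ : ℕ) :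
    T ℓ > ∑ k ∈ Finset.Ico 1 ℓ, (ℓ.choose k : ℝ) * T k := by
  have hsum : (∑ k ∈ Ico 1 ℓ, (ℓ.choose k : ℝ) * (k ! : ℝ) ^ 2) < (ℓ ! : ℝ) ^ 2 := by
    exact_mod_cast sum_choose_mul_factorial_sq_lt ℓ
  simp only [hT, mul_div_assoc', ← sum_div]
  exact div_lt_div_of_pos_right hsum (by positivity)

theorem T_ell_gt_sum (d : ℕ) (hd : 2 ≤ d)
    (T : ℕ → ℝ) (hT : ∀ ℓ, T ℓ = ((Nat.factorial ℓ : ℝ)) ^ 2 / ((Nat.factorial d : ℝ)) ^ 2)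
    (ℓ : ℕ) (hℓ : 2 ≤ ℓ) (hℓd : ℓ ≤ d) :
    T ℓ > ∑ k ∈ Finset.Ico 1 ℓ, (ℓ.choose k : ℝ) * T k :=
  T_ell_gt_sum_general d T hT ℓ
end

section
/- Fix p* ∈ [1,∞). For any n-point set P = {x₁,…,x_n} ⊂ [0,1], the L_{p*}-discrepancy (∫₀¹ |Δ_P(t)|^{p*} dt)^{1/p*} is at least 1/(2·(p*+1)^{1/p*}·n), with equality for the midpoint nodes x_j = (2j-1)/(2n). -/
/-!
Cut `[0, 1]` into the cells `[k/n, (k+1)/n]`. Since `n * (Δ_P(t) + t)` is an integer, on every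
cell `|Δ_P(t)|` is at least the distance from `t` to the nearer end of the cell, and the `p`-th
power of this tent function has integral `(1/(2n))^p / (p+1)` over `[0, 1]`. For the midpoint
nodes the count jumps exactly at the cell midpoints, so `|Δ_P|` is the tent function itself.
-/

open MeasureTheory Set

lemma min_sub_sub_le_abs_sub {a b m : ℝ} (hm : m ≤ a ∨ b ≤ m) (t : ℝ) :
    min (t - a) (b - t) ≤ |m - t| := by
  rcases hm with hm | hm
  · exact (min_le_left _ _).trans (by rw [abs_sub_comm]; linarith [le_abs_self (t - m)])
  · exact (min_le_right _ _).trans (by linarith [le_abs_self (m - t)])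

lemma abs_sub_eq_min_of_le_midpoint {a b t : ℝ} (ha : a ≤ t) (hb : t ≤ (a + b) / 2) :
    |a - t| = min (t - a) (b - t) := by
  rw [abs_sub_comm, abs_of_nonneg (by linarith), min_eq_left (by linarith)]

lemma abs_sub_eq_min_of_midpoint_le {a b t : ℝ} (ha : (a + b) / 2 ≤ t) (hb : t ≤ b) :
    |b - t| = min (t - a) (b - t) := by
  rw [abs_of_nonneg (by linarith), min_eq_right (by linarith)]

lemma integral_sub_left_rpow {a b p : ℝ} (hp : 0 ≤ p) :
    ∫ t in a..b, (t - a) ^ p = (b - a) ^ (p + 1) / (p + 1) := by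
  rw [intervalIntegral.integral_comp_sub_right (· ^ p), sub_self,
    integral_rpow (Or.inl (by linarith)), Real.zero_rpow (by linarith), sub_zero]

lemma integral_sub_right_rpow {a b p : ℝ} (hp : 0 ≤ p) :
    ∫ t in a..b, (b - t) ^ p = (b - a) ^ (p + 1) / (p + 1) := by
  rw [intervalIntegral.integral_comp_sub_left (· ^ p), sub_self,
    integral_rpow (Or.inl (by linarith)), Real.zero_rpow (by linarith), sub_zero]

lemma integral_min_sub_sub_rpow {a b p : ℝ} (hab : a ≤ b) (hp : 0 ≤ p) :
    ∫ t in a..b, min (t - a) (b - t) ^ p = ((b - a) / 2) ^ p * (b - a) / (p + 1) := by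
  obtain ⟨c, hc⟩ : ∃ c, c = (a + b) / 2 := ⟨_, rfl⟩
  have hcont : Continuous fun t => min (t - a) (b - t) ^ p :=
    (Real.continuous_rpow_const hp).comp (by fun_prop)
  have hleft : ∫ t in a..c, min (t - a) (b - t) ^ p = ∫ t in a..c, (t - a) ^ p := by
    refine intervalIntegral.integral_congr fun t ht => ?_
    rw [uIcc_of_le (by linarith)] at ht
    simp only [min_eq_left (show t - a ≤ b - t by linarith [ht.2])]
  have hright : ∫ t in c..b, min (t - a) (b - t) ^ p = ∫ t in c..b, (b - t) ^ p := by
    refine intervalIntegral.integral_congr fun t ht => ?_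
    rw [uIcc_of_le (by linarith)] at ht
    simp only [min_eq_right (show b - t ≤ t - a by linarith [ht.1])]
  rw [← intervalIntegral.integral_add_adjacent_intervals (hcont.intervalIntegrable a c)
    (hcont.intervalIntegrable c b), hleft, hright, integral_sub_left_rpow hp,
    integral_sub_right_rpow hp, show c - a = (b - a) / 2 by linarith,
    show b - c = (b - a) / 2 by linarith, Real.rpow_add_one' (by linarith) (by linarith)]
  ring

noncomputable def localDiscrepancy {n : ℕ} (x : Fin n → ℝ) (t : ℝ) : ℝ :=
  ((Finset.univ.filter (fun j : Fin n => x j < t)).card : ℝ) / n - t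

noncomputable def midpointNodes (n : ℕ) : Fin n → ℝ :=
  fun j => (2 * ((j : ℕ) : ℝ) + 1) / (2 * n)

section
variable {n : ℕ}

lemma monotone_card_filter_lt (x : Fin n → ℝ) :
    Monotone fun t => (Finset.univ.filter (fun j : Fin n => x j < t)).card :=
  fun _ _ hst => Finset.card_le_card <| Finset.monotone_filter_right _ fun _ _ h => h.trans_le hst

lemma measurable_localDiscrepancy (x : Fin n → ℝ) : Measurable (localDiscrepancy x) :=
  ((Nat.mono_cast.comp (monotone_card_filter_lt x)).measurable.div_const _).sub measurable_id

lemma abs_localDiscrepancy_le_one (x : Fin n → ℝ) {t : ℝ} (ht : t ∈ Icc (0 : ℝ) 1) :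
    |localDiscrepancy x t| ≤ 1 := by
  have h0 : (0 : ℝ) ≤ (Finset.univ.filter (fun j : Fin n => x j < t)).card / n := by positivity
  have h1 : ((Finset.univ.filter (fun j : Fin n => x j < t)).card : ℝ) / n ≤ 1 :=
    div_le_one_of_le₀ (by exact_mod_cast (Finset.card_filter_le _ _).trans_eq (Finset.card_fin n))
      n.cast_nonneg
  exact abs_sub_le_iff.2 ⟨by linarith [ht.1], by linarith [ht.2]⟩

lemma intervalIntegrable_abs_localDiscrepancy_rpow (x : Fin n → ℝ) {p : ℝ} (hp : 0 ≤ p) :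
    IntervalIntegrable (fun t => |localDiscrepancy x t| ^ p) volume 0 1 := by
  rw [intervalIntegrable_iff_integrableOn_Icc_of_le zero_le_one]
  refine Measure.integrableOn_of_bounded measure_Icc_lt_top.ne
    ((measurable_localDiscrepancy x).abs.pow_const p).aestronglyMeasurable (M := 1) ?_
  filter_upwards [ae_restrict_mem measurableSet_Icc] with t ht
  rw [Real.norm_of_nonneg (by positivity)]
  exact Real.rpow_le_one (abs_nonneg _) (abs_localDiscrepancy_le_one x ht) hp

lemma uIcc_cell_subset_uIcc_zero_one {k : ℕ} (hk : k < n) :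
    uIcc (k / n : ℝ) ((k + 1) / n) ⊆ uIcc 0 1 := by
  have hn : (0 : ℝ) < n := by exact_mod_cast k.zero_le.trans_lt hk
  have hmem : ∀ m ≤ n, (m / n : ℝ) ∈ uIcc 0 1 := fun m hm => by
    rw [uIcc_of_le zero_le_one]
    exact ⟨by positivity, div_le_one_of_le₀ (by exact_mod_cast hm) hn.le⟩
  exact uIcc_subset_uIcc (hmem k hk.le) (by exact_mod_cast hmem (k + 1) hk)

lemma integral_eq_sum_integral_cells (hn : 0 < n) {f : ℝ → ℝ}
    (hf : IntervalIntegrable f volume 0 1) :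
    ∫ t in (0 : ℝ)..1, f t = ∑ k ∈ Finset.range n, ∫ t in (k / n : ℝ)..((k + 1) / n), f t := by
  convert (intervalIntegral.sum_integral_adjacent_intervals (a := fun k : ℕ => (k / n : ℝ))
    fun k hk => hf.mono_set (by push_cast; exact uIcc_cell_subset_uIcc_zero_one hk)).symm using 2
  · simp
  · simp [hn.ne']
  · push_cast; rfl

lemma sum_integral_min_cells_rpow (hn : 0 < n) {p : ℝ} (hp : 0 ≤ p) :
    ∑ k ∈ Finset.range n, ∫ t in (k / n : ℝ)..((k + 1) / n), min (t - k / n) ((k + 1) / n - t) ^ p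
      = (1 / (2 * n)) ^ p / (p + 1) := by
  have hn' : (0 : ℝ) < n := by exact_mod_cast hn
  have hcell : ∀ k : ℕ, ((k + 1) / n - k / n : ℝ) = 1 / n := fun k => by ring
  rw [Finset.sum_congr rfl fun k _ => by
    rw [integral_min_sub_sub_rpow (div_le_div_of_nonneg_right (by linarith) hn'.le) hp, hcell],
    Finset.sum_const, Finset.card_range, nsmul_eq_mul]
  rw [show (1 / n / 2 : ℝ) = 1 / (2 * n) by ring]
  field_simp

lemma min_cell_le_abs_localDiscrepancy (x : Fin n → ℝ) (k : ℕ) (t : ℝ) :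
    min (t - k / n) ((k + 1) / n - t) ≤ |localDiscrepancy x t| := by
  refine min_sub_sub_le_abs_sub ?_ t
  rcases Nat.lt_or_ge k (Finset.univ.filter (fun j : Fin n => x j < t)).card with h | h
  · exact Or.inr (div_le_div_of_nonneg_right (by exact_mod_cast h) n.cast_nonneg)
  · exact Or.inl (div_le_div_of_nonneg_right (by exact_mod_cast h) n.cast_nonneg)

lemma le_integral_abs_localDiscrepancy_rpow (hn : 0 < n) {p : ℝ} (hp : 0 ≤ p)
    (x : Fin n → ℝ) :
    (1 / (2 * n)) ^ p / (p + 1) ≤ ∫ t in (0 : ℝ)..1, |localDiscrepancy x t| ^ p := by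
  have hint := intervalIntegrable_abs_localDiscrepancy_rpow x hp
  rw [integral_eq_sum_integral_cells hn hint, ← sum_integral_min_cells_rpow hn hp]
  refine Finset.sum_le_sum fun k hk => ?_
  refine intervalIntegral.integral_mono_on
    (div_le_div_of_nonneg_right (by linarith) n.cast_nonneg)
    (((Real.continuous_rpow_const hp).comp (by fun_prop)).intervalIntegrable _ _)
    (hint.mono_set (uIcc_cell_subset_uIcc_zero_one (Finset.mem_range.1 hk))) fun t ht => ?_
  exact Real.rpow_le_rpow (le_min (sub_nonneg.2 ht.1) (sub_nonneg.2 ht.2))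
    (min_cell_le_abs_localDiscrepancy x k t) hp

lemma card_midpointNodes_lt (hn : 0 < n) {m : ℕ} (hm : m ≤ n) {t : ℝ}
    (hlow : m - 1 / 2 < n * t) (hhigh : n * t ≤ m + 1 / 2) :
    (Finset.univ.filter fun j => midpointNodes n j < t).card = m := by
  have hmem : ∀ j : Fin n, midpointNodes n j < t ↔ (j : ℕ) < m := fun j => by
    rw [midpointNodes, div_lt_iff₀ (by positivity)]
    constructor
    · intro h
      exact_mod_cast (show ((j : ℕ) : ℝ) < m by linarith)
    · intro h
      have : ((j : ℕ) : ℝ) + 1 ≤ m := by exact_mod_cast h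
      linarith
  rw [Finset.filter_congr fun j _ => hmem j, Fin.card_filter_val_lt, min_eq_right hm]

lemma abs_localDiscrepancy_midpointNodes {k : ℕ} (hk : k < n) {t : ℝ}
    (ht : t ∈ Icc (k / n : ℝ) ((k + 1) / n)) :
    |localDiscrepancy (midpointNodes n) t| = min (t - k / n) ((k + 1) / n - t) := by
  have hn : 0 < n := k.zero_le.trans_lt hk
  have hn' : (0 : ℝ) < n := by exact_mod_cast hn
  have hlow : k ≤ n * t := by rw [← div_le_iff₀' hn']; exact ht.1
  have hhigh : n * t ≤ k + 1 := by rw [← le_div_iff₀' hn']; exact ht.2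
  have hmid : ((k / n + (k + 1) / n) / 2 : ℝ) = (k + 1 / 2) / n := by ring
  rw [localDiscrepancy]
  rcases le_or_gt (n * t) (k + 1 / 2) with h | h
  · rw [card_midpointNodes_lt hn hk.le (by linarith) h]
    refine abs_sub_eq_min_of_le_midpoint ht.1 ?_
    rwa [hmid, le_div_iff₀' hn']
  · rw [card_midpointNodes_lt hn hk (by push_cast; linarith) (by push_cast; linarith)]
    push_cast
    refine abs_sub_eq_min_of_midpoint_le ?_ ht.2
    rw [hmid, div_le_iff₀' hn']
    exact h.le

lemma integral_abs_localDiscrepancy_midpointNodes_rpow (hn : 0 < n) {p : ℝ} (hp : 0 ≤ p) :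
    ∫ t in (0 : ℝ)..1, |localDiscrepancy (midpointNodes n) t| ^ p
      = (1 / (2 * n)) ^ p / (p + 1) := by
  rw [integral_eq_sum_integral_cells hn (intervalIntegrable_abs_localDiscrepancy_rpow _ hp),
    ← sum_integral_min_cells_rpow hn hp]
  refine Finset.sum_congr rfl fun k hk => intervalIntegral.integral_congr fun t ht => ?_
  rw [uIcc_of_le (div_le_div_of_nonneg_right (by linarith) n.cast_nonneg)] at ht
  simp only [abs_localDiscrepancy_midpointNodes (Finset.mem_range.1 hk) ht]

end

theorem midpoint_minimizes_Lp_discrepancy (n : ℕ) (hn : 0 < n) (p : ℝ) (hp : 1 ≤ p) :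
    (∀ x : Fin n → ℝ, (∀ j, x j ∈ Set.Icc (0 : ℝ) 1) →
      1 / (2 * (p + 1) ^ (1 / p) * n) ≤
        (∫ t in (0:ℝ)..1,
          |((Finset.univ.filter (fun j : Fin n => x j < t)).card : ℝ) / n - t| ^ p) ^ (1 / p)) ∧
    (∫ t in (0:ℝ)..1,
        |((Finset.univ.filter
          (fun j : Fin n => (2 * ((j : ℕ) : ℝ) + 1) / (2 * n) < t)).card : ℝ) / n - t| ^ p) ^ (1 / p)
      = 1 / (2 * (p + 1) ^ (1 / p) * n) := by
  have hp0 : 0 ≤ p := by linarith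
  have hroot : ((1 / (2 * n : ℝ)) ^ p / (p + 1)) ^ (1 / p) = 1 / (2 * (p + 1) ^ (1 / p) * n) := by
    rw [Real.div_rpow (by positivity) (by linarith), ← Real.rpow_mul (by positivity),
      mul_one_div_cancel (by linarith), Real.rpow_one]
    field_simp
  refine ⟨fun x _ => ?_, ?_⟩
  · rw [← hroot]
    exact Real.rpow_le_rpow (by positivity) (le_integral_abs_localDiscrepancy_rpow hn hp0 x)
      (by positivity)
  · rw [← hroot]
    exact congrArg (· ^ (1 / p)) (integral_abs_localDiscrepancy_midpointNodes_rpow hn hp0)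
end

section
/- Let P = {x₁,…,x_n} be a point set in [0,1)^d, and for nonempty u ⊆ {1,…,d} let K_u(x_u, t_u) = ∏_{i∈u} K(x_i,t_i) with K(x,t) = t if x ≥ t and K(x,t) = t−1 if x < t. Then for every nonempty u ⊆ {1,…,d} and every t ∈ [0,1]^d: ∑_{j=1}^n K_u(x_{j,u}, t_u) = n · ∑_{k=1}^{|u|} (−1)^k ∑_{v ⊆ u, |v|=k} Δ_{P_v}(t_v) · ∏_{i ∈ u∖v} t_i, where Δ_{P_v}(t_v) = (1/n)∑_{j=1}^n ∏_{i∈v} 1_{[0,t_i)}(x_{j,i}) − ∏_{i∈v} t_i is the local discrepancy of the projection of P onto coordinates in v. -/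
/-!
Writing `K(x, t) = t - 1_{[0,t)}(x)` and expanding the product over `u` gives
`∑_{v ⊆ u} (-1)^|v| (∑_j ∏_{i ∈ v} 1_{[0,t_i)}(x_{j,i})) ∏_{i ∈ u \ v} t_i`. Replacing each counting
sum by `n (Δ_{P_v}(t_v) + ∏_{i ∈ v} t_i)` leaves the extra term `n ∏_{i ∈ u} t_i ∑_{v ⊆ u} (-1)^|v|`,
which vanishes because `u` is nonempty, while the `v = ∅` term drops out since `Δ_{P_∅} = 0`.
-/

open Finset

theorem ite_le_sub_one_eq_sub_ite_lt {R : Type*} [Ring R] [LinearOrder R] (x t : R) :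
    (if t ≤ x then t else t - 1) = t - if x < t then 1 else 0 := by
  rcases lt_or_ge x t with h | h
  · simp [h, not_le.2 h]
  · simp [h, not_lt.2 h]

theorem Finset.prod_sub_eq_sum_powerset {ι R : Type*} [CommRing R] [DecidableEq ι]
    (f g : ι → R) (s : Finset ι) :
    ∏ i ∈ s, (f i - g i)
      = ∑ t ∈ s.powerset, (-1) ^ t.card * (∏ i ∈ t, g i) * ∏ i ∈ s \ t, f i := by
  simp_rw [sub_eq_neg_add, prod_add, prod_neg]

theorem Finset.sum_powerset_neg_one_pow_card_of_nonempty' {α R : Type*} [Ring R] {s : Finset α}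
    (hs : s.Nonempty) : ∑ t ∈ s.powerset, (-1 : R) ^ t.card = 0 := by
  exact_mod_cast congrArg (Int.cast : ℤ → R) (sum_powerset_neg_one_pow_card_of_nonempty hs)

theorem Finset.sum_Icc_neg_one_pow_mul_sum_card_eq {α R : Type*} [CommRing R] [DecidableEq α]
    (s : Finset α) (f : Finset α → R) :
    ∑ k ∈ Icc 1 s.card, (-1 : R) ^ k * ∑ t ∈ s.powerset.filter (·.card = k), f t
      = ∑ t ∈ s.powerset, (-1) ^ t.card * f t - f ∅ := by
  have graded : ∀ k, ∑ t ∈ s.powersetCard k, (-1 : R) ^ t.card * f t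
      = (-1) ^ k * ∑ t ∈ s.powersetCard k, f t := fun k ↦ by
    rw [mul_sum]
    exact sum_congr rfl fun t ht ↦ by rw [(mem_powersetCard.1 ht).2]
  rw [sum_powerset, sum_range_eq_add_Ico _ s.card.succ_pos, Nat.succ_eq_add_one,
    Ico_add_one_right_eq_Icc]
  simp_rw [graded, ← powersetCard_eq_filter]
  simp

theorem kernel_sum_discrepancy_formula_general (d n : ℕ)
    (x : Fin n → Fin d → ℝ)
    (t : Fin d → ℝ)
    (u : Finset (Fin d)) (hu : u.Nonempty) :
    ∑ j, ∏ i ∈ u, (if t i ≤ x j i then t i else t i - 1)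
      = n * ∑ k ∈ Finset.Icc 1 u.card, (-1 : ℝ) ^ k *
          ∑ v ∈ u.powerset.filter (fun v => v.card = k),
            ((1 / (n : ℝ)) * ∑ j, ∏ i ∈ v, (if x j i < t i then (1:ℝ) else 0)
                - ∏ i ∈ v, t i) * ∏ i ∈ u \ v, t i := by
  classical
  obtain rfl | hn := n.eq_zero_or_pos
  · simp
  set A : Finset (Fin d) → ℝ := fun v => ∑ j, ∏ i ∈ v, (if x j i < t i then (1:ℝ) else 0)
  have expand : ∑ j, ∏ i ∈ u, (if t i ≤ x j i then t i else t i - 1)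
      = ∑ v ∈ u.powerset, (-1) ^ v.card * A v * ∏ i ∈ u \ v, t i := by
    simp_rw [ite_le_sub_one_eq_sub_ite_lt, prod_sub_eq_sum_powerset]
    rw [sum_comm]
    simp only [A, mul_sum, sum_mul]
  have term : ∀ v ∈ u.powerset,
      (n : ℝ) * ((-1) ^ v.card * ((1 / n * A v - ∏ i ∈ v, t i) * ∏ i ∈ u \ v, t i))
      = (-1) ^ v.card * A v * ∏ i ∈ u \ v, t i - (-1) ^ v.card * (n * ∏ i ∈ u, t i) := by
    intro v hv
    rw [← prod_sdiff (mem_powerset.1 hv)]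
    field_simp
  rw [sum_Icc_neg_one_pow_mul_sum_card_eq, mul_sub, mul_sum, sum_congr rfl term, sum_sub_distrib,
    ← sum_mul, sum_powerset_neg_one_pow_card_of_nonempty' hu, expand]
  simp [A, hn.ne']

theorem kernel_sum_discrepancy_formula (d n : ℕ) (hn : 0 < n)
    (x : Fin n → Fin d → ℝ) (hx : ∀ j i, x j i ∈ Set.Ico (0 : ℝ) 1)
    (t : Fin d → ℝ) (ht : ∀ i, t i ∈ Set.Icc (0 : ℝ) 1)
    (u : Finset (Fin d)) (hu : u.Nonempty) :
    ∑ j, ∏ i ∈ u, (if t i ≤ x j i then t i else t i - 1)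
      = n * ∑ k ∈ Finset.Icc 1 u.card, (-1 : ℝ) ^ k *
          ∑ v ∈ u.powerset.filter (fun v => v.card = k),
            ((1 / (n : ℝ)) * ∑ j, ∏ i ∈ v, (if x j i < t i then (1:ℝ) else 0)
                - ∏ i ∈ v, t i) * ∏ i ∈ u \ v, t i :=
  kernel_sum_discrepancy_formula_general d n x t u hu
end

section
/- Let g(t₁,t₂) = −2n t₁ t₂ + t₂⌈n t₁⌉ + t₁⌈n t₂⌉ on [0,1]². Then for every p* ∈ [1,∞), the L_{p*}-norm of g satisfies ‖g‖_{L_{p*}([0,1]²)} ≤ 2^{p*+1}/(p*+1)². -/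
/-!
With `c x = ⌈x⌉ - x ∈ [0, 1)`, the integrand is `g(s, t) = c(n s) t + s c(n t) ≥ 0`, so convexity of
`x ↦ x ^ p` gives `|g| ^ p ≤ 2 ^ (p - 1) (c(n s) ^ p t ^ p + s ^ p c(n t) ^ p)`. As `c` is
`1`-periodic, `∫₀¹ c(n t) ^ p dt = ∫₀¹ (1 - t) ^ p dt = 1 / (p + 1)`, so the double integral is at
most `2 ^ p / (p + 1) ^ 2`. Finally `(2 ^ p / (p + 1) ^ 2) ^ (1 / p) ≤ 2 ^ (p + 1) / (p + 1) ^ 2`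
is, after taking logarithms, `(2 p - 2) log (p + 1) ≤ p ^ 2 log 2`.
-/

open MeasureTheory Set Real Function Filter intervalIntegral

lemma Real.rpow_add_le_mul_rpow_add_rpow {a b p : ℝ} (ha : 0 ≤ a) (hb : 0 ≤ b) (hp : 1 ≤ p) :
    (a + b) ^ p ≤ 2 ^ (p - 1) * (a ^ p + b ^ p) := by
  exact_mod_cast NNReal.rpow_add_le_mul_rpow_add_rpow ⟨a, ha⟩ ⟨b, hb⟩ hp

theorem Function.Periodic.intervalIntegral_comp_natCast_mul {E : Type*} [NormedAddCommGroup E]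
    [NormedSpace ℝ E] {f : ℝ → E} {T : ℝ} (hf : Periodic f T)
    (hfi : ∀ a b, IntervalIntegrable f volume a b) {n : ℕ} (hn : n ≠ 0) :
    ∫ x in 0..T, f (n * x) = ∫ x in 0..T, f x := by
  have hn' : (n : ℝ) ≠ 0 := Nat.cast_ne_zero.2 hn
  have h := hf.intervalIntegral_add_zsmul_eq n 0 hfi
  simp only [zero_add, natCast_zsmul, nsmul_eq_mul] at h
  rw [integral_comp_mul_left f hn', mul_zero, h, ← Nat.cast_smul_eq_nsmul ℝ, smul_smul,
    inv_mul_cancel₀ hn', one_smul]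

theorem intervalIntegral.integral_mono_of_nonneg_on {f g : ℝ → ℝ} {a b : ℝ} (hab : a ≤ b)
    (hg : IntervalIntegrable g volume a b) (hf : ∀ x ∈ Icc a b, 0 ≤ f x)
    (hfg : ∀ x ∈ Icc a b, f x ≤ g x) :
    ∫ x in a..b, f x ≤ ∫ x in a..b, g x := by
  rw [integral_of_le hab, integral_of_le hab]
  exact integral_mono_of_nonneg
    (ae_restrict_of_forall_mem measurableSet_Ioc fun x hx => hf x (Ioc_subset_Icc_self hx)) hg.1
    (ae_restrict_of_forall_mem measurableSet_Ioc fun x hx => hfg x (Ioc_subset_Icc_self hx))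

lemma intervalIntegrable_ceil_sub_self_rpow_comp {p : ℝ} (hp : 0 ≤ p) {φ : ℝ → ℝ}
    (hφ : Measurable φ) (a b : ℝ) :
    IntervalIntegrable (fun x => ((⌈φ x⌉ : ℝ) - φ x) ^ p) volume a b := by
  have hm : Measurable fun x => ((⌈φ x⌉ : ℝ) - φ x) ^ p := by measurability
  refine intervalIntegrable_iff.2 (Measure.integrableOn_of_bounded (M := 1)
    measure_Ioc_lt_top.ne hm.aestronglyMeasurable (Eventually.of_forall fun x => ?_))
  have h0 : 0 ≤ (⌈φ x⌉ : ℝ) - φ x := sub_nonneg.2 (Int.le_ceil _)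
  have h1 : (⌈φ x⌉ : ℝ) - φ x ≤ 1 := by linarith [Int.ceil_lt_add_one (φ x)]
  rw [norm_of_nonneg (rpow_nonneg h0 p)]
  exact rpow_le_one h0 h1 hp

lemma periodic_ceil_sub_self_rpow (p : ℝ) : Periodic (fun x : ℝ => ((⌈x⌉ : ℝ) - x) ^ p) 1 := by
  intro x
  simp only [Int.ceil_add_one, Int.cast_add, Int.cast_one, add_sub_add_right_eq_sub]

lemma integral_rpow_zero_one {p : ℝ} (hp : -1 < p) : ∫ x in 0..1, x ^ p = 1 / (p + 1) := by
  norm_num [integral_rpow (Or.inl hp), zero_rpow (by linarith : p + 1 ≠ 0)]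

lemma integral_ceil_sub_self_rpow {p : ℝ} (hp : -1 < p) :
    ∫ x in 0..1, ((⌈x⌉ : ℝ) - x) ^ p = 1 / (p + 1) := by
  have hceil : ∀ x ∈ Ioc (0 : ℝ) 1, ((⌈x⌉ : ℝ) - x) ^ p = (1 - x) ^ p := fun x hx => by
    rw [(Int.ceil_eq_iff (z := 1)).2 ⟨by norm_num [hx.1], by norm_num [hx.2]⟩, Int.cast_one]
  rw [integral_congr_ae' (Eventually.of_forall fun x hx => hceil x hx) (by simp),
    integral_comp_sub_left (fun x => x ^ p), sub_self, sub_zero, integral_rpow_zero_one hp]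

lemma integral_ceil_natCast_mul_sub_rpow {p : ℝ} (hp : 0 ≤ p) {n : ℕ} (hn : 0 < n) :
    ∫ x in 0..1, ((⌈(n : ℝ) * x⌉ : ℝ) - n * x) ^ p = 1 / (p + 1) := by
  rw [(periodic_ceil_sub_self_rpow p).intervalIntegral_comp_natCast_mul
    (intervalIntegrable_ceil_sub_self_rpow_comp hp measurable_id) hn.ne',
    integral_ceil_sub_self_rpow (by linarith)]

theorem intervalIntegral.integral_integral_le_of_le_mul_add_mul {F : ℝ → ℝ → ℝ}
    {f₁ f₂ g₁ g₂ : ℝ → ℝ} {a b c d : ℝ} (hab : a ≤ b) (hcd : c ≤ d)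
    (hF : ∀ s ∈ Icc a b, ∀ t ∈ Icc c d, 0 ≤ F s t)
    (hFle : ∀ s ∈ Icc a b, ∀ t ∈ Icc c d, F s t ≤ f₁ s * g₁ t + f₂ s * g₂ t)
    (hf₁ : IntervalIntegrable f₁ volume a b) (hf₂ : IntervalIntegrable f₂ volume a b)
    (hg₁ : IntervalIntegrable g₁ volume c d) (hg₂ : IntervalIntegrable g₂ volume c d) :
    ∫ s in a..b, ∫ t in c..d, F s t ≤
      (∫ s in a..b, f₁ s) * (∫ t in c..d, g₁ t) + (∫ s in a..b, f₂ s) * (∫ t in c..d, g₂ t) := by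
  have hinner : ∀ s ∈ Icc a b, ∫ t in c..d, F s t ≤
      f₁ s * (∫ t in c..d, g₁ t) + f₂ s * (∫ t in c..d, g₂ t) := fun s hs => by
    rw [← integral_const_mul, ← integral_const_mul,
      ← integral_add (hg₁.const_mul _) (hg₂.const_mul _)]
    exact integral_mono_of_nonneg_on hcd ((hg₁.const_mul _).add (hg₂.const_mul _))
      (hF s hs) (hFle s hs)
  calc ∫ s in a..b, ∫ t in c..d, F s t
      ≤ ∫ s in a..b, (f₁ s * (∫ t in c..d, g₁ t) + f₂ s * (∫ t in c..d, g₂ t)) :=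
        integral_mono_of_nonneg_on hab ((hf₁.mul_const _).add (hf₂.mul_const _))
          (fun s hs => integral_nonneg hcd fun t ht => hF s hs t ht) hinner
    _ = _ := by
        rw [integral_add (hf₁.mul_const _) (hf₂.mul_const _), integral_mul_const,
          integral_mul_const]

lemma abs_rpow_le_ceil_sub_rpow (m : ℝ) {p s t : ℝ} (hp : 1 ≤ p) (hs : 0 ≤ s) (ht : 0 ≤ t) :
    |(-2) * m * s * t + t * (⌈m * s⌉ : ℝ) + s * (⌈m * t⌉ : ℝ)| ^ p ≤
      2 ^ (p - 1) * ((⌈m * s⌉ : ℝ) - m * s) ^ p * t ^ p +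
        2 ^ (p - 1) * s ^ p * ((⌈m * t⌉ : ℝ) - m * t) ^ p := by
  have hcs : 0 ≤ (⌈m * s⌉ : ℝ) - m * s := sub_nonneg.2 (Int.le_ceil _)
  have hct : 0 ≤ (⌈m * t⌉ : ℝ) - m * t := sub_nonneg.2 (Int.le_ceil _)
  have hg : (-2) * m * s * t + t * (⌈m * s⌉ : ℝ) + s * (⌈m * t⌉ : ℝ) =
      ((⌈m * s⌉ : ℝ) - m * s) * t + s * ((⌈m * t⌉ : ℝ) - m * t) := by ring
  rw [hg, abs_of_nonneg (by positivity)]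
  calc (((⌈m * s⌉ : ℝ) - m * s) * t + s * ((⌈m * t⌉ : ℝ) - m * t)) ^ p
      ≤ 2 ^ (p - 1) * ((((⌈m * s⌉ : ℝ) - m * s) * t) ^ p + (s * ((⌈m * t⌉ : ℝ) - m * t)) ^ p) :=
        rpow_add_le_mul_rpow_add_rpow (by positivity) (by positivity) hp
    _ = _ := by rw [mul_rpow hcs ht, mul_rpow hs hct]; ring

lemma two_mul_sub_two_mul_log_add_one_le {p : ℝ} (hp : 1 ≤ p) :
    (2 * p - 2) * log (p + 1) ≤ p ^ 2 * log 2 := by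
  -- tangent line of `log` at `4 = p + 1`, i.e. `p = 3`, where the inequality is tightest
  have htangent : log (p + 1) ≤ 2 * log 2 + (p - 3) / 4 := by
    have h := log_le_sub_one_of_pos (x := (p + 1) / 4) (by positivity)
    rw [log_div (by positivity) (by norm_num), show (4 : ℝ) = 2 ^ 2 by norm_num, log_pow] at h
    push_cast at h
    linarith
  have hlog2 : 1 / 2 < log 2 := by linarith [log_two_gt_d9]
  nlinarith [mul_le_mul_of_nonneg_left htangent (by linarith : (0 : ℝ) ≤ 2 * p - 2),
    mul_nonneg (by linarith : (0 : ℝ) ≤ log 2 - 1 / 2) (sq_nonneg (p - 2))]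

lemma two_rpow_div_sq_rpow_one_div_le {p : ℝ} (hp : 1 ≤ p) :
    (2 ^ p / (p + 1) ^ 2) ^ (1 / p) ≤ 2 ^ (p + 1) / (p + 1) ^ 2 := by
  have hp0 : 0 < p := by linarith
  rw [← log_le_log_iff (by positivity) (by positivity), log_rpow (by positivity),
    log_div (by positivity) (by positivity), log_div (by positivity) (by positivity),
    log_rpow two_pos, log_rpow two_pos, log_pow, one_div_mul_eq_div, div_le_iff₀ hp0]
  push_cast
  nlinarith [two_mul_sub_two_mul_log_add_one_le hp]

theorem g_Lp_norm_bound (n : ℕ) (hn : 0 < n) (p : ℝ) (hp : 1 ≤ p) :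
    (∫ t₁ in (0:ℝ)..1, ∫ t₂ in (0:ℝ)..1,
        |(-2) * n * t₁ * t₂ + t₂ * (⌈(n : ℝ) * t₁⌉ : ℝ) + t₁ * (⌈(n : ℝ) * t₂⌉ : ℝ)| ^ p) ^ (1 / p)
      ≤ 2 ^ (p + 1) / (p + 1) ^ 2 := by
  have hp0 : 0 ≤ p := by linarith
  have hc_int := intervalIntegrable_ceil_sub_self_rpow_comp hp0 (measurable_const_mul (n : ℝ)) 0 1
  have ht_int : IntervalIntegrable (fun t : ℝ => t ^ p) volume 0 1 :=
    (continuous_rpow_const hp0).intervalIntegrable 0 1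
  have hI : ∫ t₁ in (0:ℝ)..1, ∫ t₂ in (0:ℝ)..1,
      |(-2) * n * t₁ * t₂ + t₂ * (⌈(n : ℝ) * t₁⌉ : ℝ) + t₁ * (⌈(n : ℝ) * t₂⌉ : ℝ)| ^ p
      ≤ 2 ^ p / (p + 1) ^ 2 := by
    refine (integral_integral_le_of_le_mul_add_mul (F := fun t₁ t₂ =>
        |(-2) * n * t₁ * t₂ + t₂ * (⌈(n : ℝ) * t₁⌉ : ℝ) + t₁ * (⌈(n : ℝ) * t₂⌉ : ℝ)| ^ p)
      (f₁ := fun s => 2 ^ (p - 1) * ((⌈(n : ℝ) * s⌉ : ℝ) - n * s) ^ p)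
      (f₂ := fun s => 2 ^ (p - 1) * s ^ p) zero_le_one zero_le_one
      (fun s _ t _ => by positivity) (fun s hs t ht => abs_rpow_le_ceil_sub_rpow n hp hs.1 ht.1)
      (hc_int.const_mul _) (ht_int.const_mul _) ht_int hc_int).trans_eq ?_
    rw [intervalIntegral.integral_const_mul, intervalIntegral.integral_const_mul,
      integral_ceil_natCast_mul_sub_rpow hp0 hn,
      integral_rpow_zero_one (by linarith), rpow_sub_one two_ne_zero]
    field_simp
    ring
  calc _ ≤ (2 ^ p / (p + 1) ^ 2) ^ (1 / p) :=
        rpow_le_rpow (integral_nonneg zero_le_one fun s _ =>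
          integral_nonneg zero_le_one fun t _ => by positivity) hI (by positivity)
    _ ≤ _ := two_rpow_div_sq_rpow_one_div_le hp
end
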